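/- arXiv:1703.01095 — 2 statements merged into one kernel-verified Lean document; each statement's English description precedes it below -/
import Mathlib

section
/- Let A be a nonpositive self-adjoint operator on a Hilbert space with eigenvalues -λ_i, λ_i > 0, and eigenbasis (e_i). For Δt > 0 define S_Δt = (I - ΔtA)^{-1}. Then for every β ∈ [0,1] there is a constant C(β) (independent of Δt and n) such that for all n ∈ ℕ*, ‖(-A)^β S_Δt^n‖_{L(H)} ≤ C(β) (nΔt)^{-β}. -/
/- Smoothing property of the implicit Euler resolvent iterates: for a nonpositive
   self-adjoint diagonal operator `A` with eigenvalues `-λ_i` (λ_i > 0) and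
   `S_Δt = (I - ΔtA)⁻¹`, one has `‖(-A)^β S_Δt^n‖ ≤ C(β) (nΔt)^{-β}` for β ∈ [0,1].
   Since `(-A)^β S_Δt^n` acts diagonally with symbol `λ_i^β (1+λ_i Δt)^{-n}`, and the
   operator norm of a diagonal operator is the supremum of the absolute values of its
   symbol, the statement is equivalent to the following scalar bound, uniform in the
   eigenvalue sequence. -/
theorem implicit_euler_smoothing (β : ℝ) (hβ0 : 0 ≤ β) (hβ1 : β ≤ 1) :
    ∃ C : ℝ, 0 < C ∧
      ∀ lam : ℕ → ℝ, (∀ i, 0 < lam i) →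
      ∀ Δt : ℝ, 0 < Δt → ∀ n : ℕ, 1 ≤ n → ∀ i : ℕ,
        (lam i) ^ β * ((1 + lam i * Δt) ^ n)⁻¹ ≤ C * ((n : ℝ) * Δt) ^ (-β) := by
  refine ⟨1, one_pos, fun lam hlam Δt hΔt n hn i => ?_⟩
  set l := lam i with hl
  have hl0 : 0 < l := hlam i
  have hy : 0 < l * Δt := mul_pos hl0 hΔt
  have hn0 : (0:ℝ) < (n:ℝ) := by exact_mod_cast hn
  have hnd : 0 < (n:ℝ) * Δt := mul_pos hn0 hΔt
  have hpow : (0:ℝ) < (1 + l * Δt) ^ n := pow_pos (by linarith) n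
  have hrp : (0:ℝ) < ((n:ℝ) * Δt) ^ β := Real.rpow_pos_of_pos hnd β
  -- key inequality : l^β * (nΔt)^β ≤ (1 + lΔt)^n
  have key : l ^ β * ((n:ℝ) * Δt) ^ β ≤ (1 + l * Δt) ^ n := by
    have ht : l ^ β * ((n:ℝ) * Δt) ^ β = (l * ((n:ℝ) * Δt)) ^ β :=
      (Real.mul_rpow hl0.le hnd.le).symm
    have htpos : 0 < l * ((n:ℝ) * Δt) := mul_pos hl0 hnd
    have heq : l * ((n:ℝ) * Δt) = (n:ℝ) * (l * Δt) := by ring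
    have bern : 1 + (n:ℝ) * (l * Δt) ≤ (1 + l * Δt) ^ n :=
      one_add_mul_le_pow (by linarith : (-2:ℝ) ≤ l * Δt) n
    have hstep : (l * ((n:ℝ) * Δt)) ^ β ≤ 1 + (n:ℝ) * (l * Δt) := by
      rcases le_total (l * ((n:ℝ) * Δt)) 1 with h1 | h1
      · have := Real.rpow_le_one htpos.le h1 hβ0
        have : (l * ((n:ℝ) * Δt)) ^ β ≤ 1 := this
        nlinarith [mul_pos hn0 hy]
      · have h2 : (l * ((n:ℝ) * Δt)) ^ β ≤ (l * ((n:ℝ) * Δt)) ^ (1:ℝ) :=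
          Real.rpow_le_rpow_of_exponent_le h1 hβ1
        rw [Real.rpow_one] at h2
        calc (l * ((n:ℝ) * Δt)) ^ β ≤ l * ((n:ℝ) * Δt) := h2
          _ = (n:ℝ) * (l * Δt) := heq
          _ ≤ 1 + (n:ℝ) * (l * Δt) := by linarith
    calc l ^ β * ((n:ℝ) * Δt) ^ β = (l * ((n:ℝ) * Δt)) ^ β := ht
      _ ≤ 1 + (n:ℝ) * (l * Δt) := hstep
      _ ≤ (1 + l * Δt) ^ n := bern
  rw [one_mul, Real.rpow_neg hnd.le, mul_inv_le_iff₀ hpow]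
  calc l ^ β = l ^ β * (((n:ℝ) * Δt) ^ β * (((n:ℝ) * Δt) ^ β)⁻¹) := by
        rw [mul_inv_cancel₀ hrp.ne', mul_one]
    _ = (l ^ β * ((n:ℝ) * Δt) ^ β) * (((n:ℝ) * Δt) ^ β)⁻¹ := by ring
    _ ≤ (1 + l * Δt) ^ n * (((n:ℝ) * Δt) ^ β)⁻¹ := by
        exact mul_le_mul_of_nonneg_right key (inv_nonneg.mpr hrp.le)
    _ = (((n:ℝ) * Δt) ^ β)⁻¹ * (1 + l * Δt) ^ n := by ring
end

section
/- With λ_i = (iπ)² and S_Δt = (I-ΔtA)^{-1} acting diagonally by S_Δt e_i = (1+λ_iΔt)^{-1} e_i, for every β ∈ [0, 3/4) and κ ∈ (0, 3/4 - β) there exists C_κ(β) such that for every n ∈ ℕ*, ∑_{i=1}^∞ λ_i^{2β} (1+λ_iΔt)^{-2n} ≤ C_κ(β) (nΔt)^{-1/2 - 2β - 2κ}. -/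
/-! With `x = λ Δt`, Bernoulli's inequality gives `(1 + x)^(2n) ≥ (1 + n x)^2 ≥ (n x)^r` for every
`r ∈ [0, 2]`. Taking `r = 1/2 + 2β + 2κ` bounds the `i`-th term by `(n Δt)^(-r) λ_i^(2β - r)`, and
`λ_i^(2β - r) = λ_i^(-1/2 - 2κ)` is summable because `κ > 0`. -/

open Real

lemma rpow_le_one_add_sq {y r : ℝ} (hy : 0 ≤ y) (hr0 : 0 ≤ r) (hr2 : r ≤ 2) :
    y ^ r ≤ (1 + y) ^ 2 := by
  rcases le_or_gt y 1 with hy1 | hy1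
  · nlinarith [rpow_le_one hy hy1 hr0]
  · calc y ^ r ≤ y ^ (2 : ℝ) := rpow_le_rpow_of_exponent_le hy1.le hr2
      _ = y ^ 2 := rpow_ofNat y 2
      _ ≤ (1 + y) ^ 2 := by gcongr; linarith

lemma natCast_mul_rpow_le_one_add_pow_two_mul (n : ℕ) {x r : ℝ} (hx : 0 ≤ x) (hr0 : 0 ≤ r)
    (hr2 : r ≤ 2) : ((n : ℝ) * x) ^ r ≤ (1 + x) ^ (2 * n) :=
  calc ((n : ℝ) * x) ^ r ≤ (1 + n * x) ^ 2 := rpow_le_one_add_sq (by positivity) hr0 hr2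
    _ ≤ ((1 + x) ^ n) ^ 2 := by
        gcongr
        linarith [one_add_mul_le_pow (a := x) (by linarith) n]
    _ = (1 + x) ^ (2 * n) := by rw [← pow_mul, mul_comm]

lemma rpow_mul_inv_one_add_mul_pow_le {μ Δt : ℝ} (s t : ℝ) (hμ : 0 < μ) (hΔt : 0 < Δt) {n : ℕ}
    (hn : 1 ≤ n) (ht2 : -2 ≤ t) (ht0 : t ≤ 0) :
    μ ^ s * ((1 + μ * Δt) ^ (2 * n))⁻¹ ≤ μ ^ (s + t) * ((n : ℝ) * Δt) ^ t := by
  have hnμΔt : 0 < (n : ℝ) * (μ * Δt) := by positivity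
  have hinv : ((1 + μ * Δt) ^ (2 * n))⁻¹ ≤ ((n : ℝ) * (μ * Δt)) ^ t := by
    rw [← neg_neg t, rpow_neg hnμΔt.le]
    exact inv_anti₀ (by positivity)
      (natCast_mul_rpow_le_one_add_pow_two_mul n (by positivity) (by linarith) (by linarith))
  calc μ ^ s * ((1 + μ * Δt) ^ (2 * n))⁻¹ ≤ μ ^ s * ((n : ℝ) * (μ * Δt)) ^ t := by gcongr
    _ = μ ^ (s + t) * ((n : ℝ) * Δt) ^ t := by
        rw [mul_left_comm, mul_rpow hμ.le (by positivity), rpow_add hμ]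
        ring

lemma summable_sq_succ_mul_pi_rpow {q : ℝ} (hq : q < -(1 / 2)) :
    Summable fun i : ℕ => ((((i : ℝ) + 1) * π) ^ 2) ^ q := by
  have hshift : Summable fun i : ℕ => ((i + 1 : ℕ) : ℝ) ^ (2 * q) :=
    (summable_nat_add_iff 1).mpr (summable_nat_rpow.mpr (by linarith))
  refine (hshift.mul_right ((π ^ 2) ^ q)).congr fun i => ?_
  rw [mul_pow, mul_rpow (by positivity) (by positivity),
    ← rpow_natCast_mul (by positivity : (0 : ℝ) ≤ i + 1)]
  push_cast
  rfl

theorem implicit_euler_radonifying_bound_general (β κ : ℝ)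
    (hβ0 : 0 ≤ β) (hκ0 : 0 < κ) (hκ : κ < 3 / 4 - β) :
    ∃ C : ℝ, 0 < C ∧
      ∀ Δt : ℝ, 0 < Δt → ∀ n : ℕ, 1 ≤ n →
        (∑' i : ℕ, ((((i : ℝ) + 1) * Real.pi) ^ 2) ^ (2 * β)
            * ((1 + (((i : ℝ) + 1) * Real.pi) ^ 2 * Δt) ^ (2 * n))⁻¹)
          ≤ C * ((n : ℝ) * Δt) ^ (-(1 / 2) - 2 * β - 2 * κ) := by
  set t : ℝ := -(1 / 2) - 2 * β - 2 * κ with ht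
  have hsum := summable_sq_succ_mul_pi_rpow (q := 2 * β + t) (by linarith)
  refine ⟨_, hsum.tsum_pos (fun i => by positivity) 0 (by positivity), fun Δt hΔt n hn => ?_⟩
  have hterm := fun i : ℕ => rpow_mul_inv_one_add_mul_pow_le (2 * β) t
    (μ := (((i : ℝ) + 1) * π) ^ 2) (by positivity) hΔt hn (by linarith) (by linarith)
  have hbound := hsum.mul_right (((n : ℝ) * Δt) ^ t)
  calc _ ≤ ∑' i : ℕ, ((((i : ℝ) + 1) * π) ^ 2) ^ (2 * β + t) * ((n : ℝ) * Δt) ^ t :=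
        (hbound.of_nonneg_of_le (fun i => by positivity) hterm).tsum_le_tsum hterm hbound
    _ = _ := tsum_mul_right

theorem implicit_euler_radonifying_bound (β κ : ℝ)
    (hβ0 : 0 ≤ β) (hβ : β < 3 / 4) (hκ0 : 0 < κ) (hκ : κ < 3 / 4 - β) :
    ∃ C : ℝ, 0 < C ∧
      ∀ Δt : ℝ, 0 < Δt → ∀ n : ℕ, 1 ≤ n →
        (∑' i : ℕ, ((((i : ℝ) + 1) * Real.pi) ^ 2) ^ (2 * β)
            * ((1 + (((i : ℝ) + 1) * Real.pi) ^ 2 * Δt) ^ (2 * n))⁻¹)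
          ≤ C * ((n : ℝ) * Δt) ^ (-(1 / 2) - 2 * β - 2 * κ) :=
  implicit_euler_radonifying_bound_general β κ hβ0 hκ0 hκ
end
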